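/- arXiv:2107.03493 — 4 statements merged into one kernel-verified Lean document; each statement's English description precedes it below -/
import Mathlib

section
/- Let Θ be a compact metric space, S : Θ → Θ a homeomorphism, m an S-invariant Borel probability measure on Θ, I = [0,1], and F(θ,x) = (S(θ), f_θ(x)) a skew product on Θ × I such that (θ,x) ↦ f_θ(x) is continuous and each fiber map f_θ : I → (0,1) is a strictly increasing C² map. Let μ be an ergodic F-invariant Borel probability measure on Θ × I whose first-coordinate marginal is m. Then there exists an (F,m)-invariant graph γ : Θ → I such that μ = m_γ, i.e. μ equals the pushforward of m under θ ↦ (θ, γ(θ)). -/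
open MeasureTheory Set ProbabilityTheory
open scoped ENNReal unitInterval

/-!
Disintegrate `μ = m ⊗ κ` over the base. Invariance of `μ` under `F` transports the fibre
measures along the fibre maps, `κ (S θ) = (f θ)_* (κ θ)`, and since each `f θ` is increasing the
conditional distribution function `(θ, x) ↦ κ θ [0, x]` is `F`-invariant. By ergodicity it is
a.e. equal to a constant, and a probability measure on `[0, 1]` whose distribution function is
constant almost everywhere with respect to itself is a Dirac mass. Hence `κ θ = δ (γ θ)`.
-/

section CompleteLinearOrder

variable {α : Type*} [CompleteLinearOrder α] [TopologicalSpace α] [OrderTopology α]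
  [FirstCountableTopology α] [MeasurableSpace α] {ν : Measure α} {s : Set α}

lemma measure_Ioi_sInf_eq_zero (hs : s.Nonempty) (h : ∀ x ∈ s, ν (Ioi x) = 0) :
    ν (Ioi (sInf s)) = 0 := by
  obtain ⟨x, -, hx_lim, hx_mem⟩ := exists_seq_tendsto_sInf hs (OrderBot.bddBelow s)
  refine measure_mono_null (fun y hy => ?_) (measure_iUnion_null fun n => h _ (hx_mem n))
  obtain ⟨n, hn⟩ := (hx_lim.eventually (gt_mem_nhds hy)).exists
  exact mem_iUnion.2 ⟨n, hn⟩

lemma measure_Iio_sSup_le {c : ℝ≥0∞} (hs : s.Nonempty) (h : ∀ x ∈ s, ν (Iic x) ≤ c) :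
    ν (Iio (sSup s)) ≤ c := by
  obtain ⟨x, hx_mono, hx_lim, hx_mem⟩ := exists_seq_tendsto_sSup hs (OrderTop.bddAbove s)
  calc ν (Iio (sSup s)) ≤ ν (⋃ n, Iic (x n)) := measure_mono fun y hy => by
        obtain ⟨n, hn⟩ := (hx_lim.eventually (lt_mem_nhds hy)).exists
        exact mem_iUnion.2 ⟨n, hn.le⟩
    _ = ⨆ n, ν (Iic (x n)) := (monotone_Iic.comp hx_mono).measure_iUnion
    _ ≤ c := iSup_le fun n => h _ (hx_mem n)

variable [OpensMeasurableSpace α] [IsProbabilityMeasure ν]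

theorem exists_eq_dirac_of_ae_measure_Iic_eq {c : ℝ≥0∞} (h : ∀ᵐ x ∂ν, ν (Iic x) = c) :
    ∃ t, ν = Measure.dirac t := by
  set A := {x | ν (Iic x) = c}
  have hA : ν Aᶜ = 0 := h
  obtain ⟨x₀, hx₀⟩ := h.exists
  have hc : c = 1 := by
    set u := sSup A
    have hu_Iic : ν (Iic u) = 1 := by
      rw [← prob_compl_eq_zero_iff measurableSet_Iic, compl_Iic]
      exact measure_mono_null (fun y hy hyA => (le_sSup hyA).not_gt hy) hA
    by_cases hu : u ∈ A
    · exact hu.symm.trans hu_Iic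
    refine le_antisymm (hx₀ ▸ prob_le_one) ?_
    calc 1 = ν (Iic u) := hu_Iic.symm
      _ ≤ ν (Iio u) + ν {u} := by rw [← Iio_union_right]; exact measure_union_le _ _
      _ ≤ c + 0 := add_le_add (measure_Iio_sSup_le ⟨x₀, hx₀⟩ fun x hx => hx.le)
          (measure_mono_null (singleton_subset_iff.2 hu) hA).le
      _ = c := add_zero c
  set t := sInf A
  have ht_Iio : ν (Iio t) = 0 := measure_mono_null (fun y hy hyA => (sInf_le hyA).not_gt hy) hA
  have ht_Ioi : ν (Ioi t) = 0 := measure_Ioi_sInf_eq_zero ⟨x₀, hx₀⟩ fun x hx => by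
    rw [← compl_Iic, prob_compl_eq_zero_iff measurableSet_Iic]
    exact hx.trans hc
  have ht : ν {t}ᶜ = 0 := by
    rw [← Iio_union_Ioi]
    exact measure_union_null ht_Iio ht_Ioi
  refine ⟨t, ?_⟩
  rw [← Measure.restrict_eq_self_of_ae_mem (s := {t}) ht, Measure.restrict_singleton,
    (prob_compl_eq_zero_iff (measurableSet_singleton t)).1 ht, one_smul]

end CompleteLinearOrder

section SkewProduct

variable {α Ω : Type*} [MeasurableSpace α] [MeasurableSpace Ω] {μ : Measure (α × Ω)}
  {S : α ≃ᵐ α} {g : α → Ω → Ω}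

lemma MeasureTheory.MeasurePreserving.fst_of_skewProduct
    (hF : MeasurePreserving (fun p => (S p.1, g p.1 p.2)) μ μ) :
    MeasurePreserving S μ.fst μ.fst :=
  MeasurePreserving.of_semiconj ⟨measurable_fst, rfl⟩ hF (fun _ => rfl) S.measurable

lemma ProbabilityTheory.Kernel.map_id_prod_apply (κ : Kernel α Ω) [IsSFiniteKernel κ]
    (hg : Measurable (Function.uncurry g)) (a : α) :
    (Kernel.id ×ₖ κ).map (Function.uncurry g) a = (κ a).map (g a) := by
  rw [Kernel.map_apply _ hg, Kernel.prod_apply, Kernel.id_apply, Measure.dirac_prod,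
    Measure.map_map hg measurable_prodMk_left]
  rfl

variable [StandardBorelSpace Ω] [Nonempty Ω] [IsFiniteMeasure μ]

theorem ae_map_condKernel_eq_condKernel_of_measurePreserving
    (hg : Measurable (Function.uncurry g))
    (hF : MeasurePreserving (fun p => (S p.1, g p.1 p.2)) μ μ) :
    ∀ᵐ a ∂μ.fst, (μ.condKernel a).map (g a) = μ.condKernel (S a) := by
  have hS := hF.fst_of_skewProduct
  set η := ((Kernel.id ×ₖ μ.condKernel).map (Function.uncurry g)).comap S.symm S.symm.measurable
  have hη : ∀ a, η (S a) = (μ.condKernel a).map (g a) := fun a => by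
    rw [Kernel.comap_apply, S.symm_apply_apply, Kernel.map_id_prod_apply _ hg]
  have hμη : μ = μ.fst ⊗ₘ η := by
    ext s hs
    conv_lhs => rw [← hF.map_eq, Measure.map_apply hF.measurable hs]
    conv_lhs => rw [← μ.disintegrate μ.condKernel]
    rw [Measure.compProd_apply (hF.measurable hs), Measure.compProd_apply hs,
      ← hS.lintegral_comp (Kernel.measurable_kernel_prodMk_left hs)]
    refine lintegral_congr fun a => ?_
    rw [hη, Measure.map_apply hg.of_uncurry_left (measurable_prodMk_left hs)]
    rfl
  filter_upwards [hS.quasiMeasurePreserving.ae (eq_condKernel_of_measure_eq_compProd η hμη)]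
    with a ha
  rw [← ha, hη]

end SkewProduct

section Fibre

variable {α β : Type*} [MeasurableSpace α] [MeasurableSpace β]

lemma ProbabilityTheory.Kernel.measurable_measure_Iic [LinearOrder β] [TopologicalSpace β]
    [OrderClosedTopology β] [SecondCountableTopology β] [OpensMeasurableSpace β]
    (κ : Kernel α β) [IsSFiniteKernel κ] :
    Measurable fun p : α × β => κ p.1 (Iic p.2) :=
  Kernel.measurable_kernel_prodMk_left (κ := κ.comap Prod.fst measurable_fst)
    (measurableSet_le measurable_snd (measurable_snd.comp measurable_fst))

lemma StrictMono.measure_map_Iic [LinearOrder β] [TopologicalSpace β] [OrderClosedTopology β]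
    [OpensMeasurableSpace β] {g : β → β} (hg : StrictMono g) (hgm : Measurable g)
    (ν : Measure β) (x : β) : ν.map g (Iic (g x)) = ν (Iic x) := by
  rw [Measure.map_apply hgm measurableSet_Iic]
  congr 1
  ext y
  exact hg.le_iff_le

variable [CompleteLinearOrder β] [TopologicalSpace β] [OrderTopology β] [SecondCountableTopology β]
  [OpensMeasurableSpace β] [StandardBorelSpace β]

theorem ae_exists_condKernel_eq_dirac_of_ergodic {μ : Measure (α × β)} [IsFiniteMeasure μ]
    {S : α ≃ᵐ α} {g : α → β → β} (hg : Measurable (Function.uncurry g))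
    (hg_mono : ∀ a, StrictMono (g a)) (hF : Ergodic (fun p => (S p.1, g p.1 p.2)) μ) :
    ∀ᵐ a ∂μ.fst, ∃ t, μ.condKernel a = Measure.dirac t := by
  set G : α × β → ℝ≥0∞ := fun p => μ.condKernel p.1 (Iic p.2)
  have hG_inv : G ∘ (fun p => (S p.1, g p.1 p.2)) =ᵐ[μ] G := by
    filter_upwards [ae_of_ae_map measurable_fst.aemeasurable
      (ae_map_condKernel_eq_condKernel_of_measurePreserving hg hF.toMeasurePreserving)] with p hp
    show μ.condKernel (S p.1) (Iic (g p.1 p.2)) = μ.condKernel p.1 (Iic p.2)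
    rw [← hp, (hg_mono p.1).measure_map_Iic hg.of_uncurry_left]
  obtain ⟨c, hc⟩ :=
    hF.ae_eq_const_of_ae_eq_comp₀ (Kernel.measurable_measure_Iic _).nullMeasurable hG_inv
  have hc' : ∀ᵐ p ∂(μ.fst ⊗ₘ μ.condKernel), G p = c := by
    rwa [μ.disintegrate]
  filter_upwards [Measure.ae_ae_of_ae_compProd hc'] with a ha
  exact exists_eq_dirac_of_ae_measure_Iic_eq ha

end Fibre

lemma ProbabilityTheory.Kernel.exists_measurable_ae_eq_dirac {α : Type*} [MeasurableSpace α]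
    {κ : Kernel α I} {m : Measure α} (h : ∀ᵐ a ∂m, ∃ t, κ a = Measure.dirac t) :
    ∃ γ : α → I, Measurable γ ∧ ∀ᵐ a ∂m, κ a = Measure.dirac (γ a) := by
  -- the barycenter, clamped into `I`, recovers the atom of a Dirac mass
  refine ⟨fun a => projIcc 0 1 zero_le_one (∫ x, (x : ℝ) ∂κ a),
    continuous_projIcc.measurable.comp
      (continuous_subtype_val.stronglyMeasurable.integral_kernel (κ := κ)).measurable, ?_⟩
  filter_upwards [h] with a ⟨t, ht⟩
  rw [ht, integral_dirac, projIcc_val]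

theorem exists_invariant_graph_of_ergodic_general
    {Θ : Type*} [MetricSpace Θ] [MeasurableSpace Θ] [BorelSpace Θ]
    (S : Θ ≃ₜ Θ) (m : Measure Θ)
    (f : Θ → ℝ → ℝ)
    (hmaps : ∀ θ, MapsTo (f θ) unitInterval (Ioo (0 : ℝ) 1))
    (hcont : Continuous fun p : Θ × unitInterval => f p.1 p.2)
    (hmono : ∀ θ, StrictMonoOn (f θ) unitInterval)
    (F : Θ × unitInterval → Θ × unitInterval)
    (hF : ∀ p : Θ × unitInterval,
      F p = (S p.1, ⟨f p.1 p.2, Ioo_subset_Icc_self (hmaps p.1 p.2.2)⟩))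
    (μ : Measure (Θ × unitInterval)) [IsProbabilityMeasure μ]
    (hμerg : Ergodic F μ)
    (hmarg : μ.map Prod.fst = m) :
    ∃ γ : Θ → unitInterval, Measurable γ ∧
      (∀ᵐ θ ∂m, f θ (γ θ) = (γ (S θ) : ℝ)) ∧
      μ = m.map fun θ => (θ, γ θ) := by
  set g : Θ → I → I := fun θ x => ⟨f θ x, Ioo_subset_Icc_self (hmaps θ x.2)⟩
  have hg : Measurable (Function.uncurry g) := (hcont.subtype_mk _).measurable
  have hg_mono : ∀ θ, StrictMono (g θ) := fun θ x y hxy => hmono θ x.2 y.2 hxy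
  obtain rfl : F = fun p => (S.toMeasurableEquiv p.1, g p.1 p.2) := funext hF
  subst hmarg
  have hinv := ae_map_condKernel_eq_condKernel_of_measurePreserving hg hμerg.toMeasurePreserving
  obtain ⟨γ, hγ, hκγ⟩ := Kernel.exists_measurable_ae_eq_dirac
    (ae_exists_condKernel_eq_dirac_of_ergodic hg hg_mono hμerg)
  refine ⟨γ, hγ, ?_, ?_⟩
  · filter_upwards [hinv, hκγ,
      hμerg.toMeasurePreserving.fst_of_skewProduct.quasiMeasurePreserving.ae hκγ]
      with θ hθ hγθ hγSθ
    rw [hγθ, hγSθ, Measure.map_dirac' hg.of_uncurry_left] at hθ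
    exact congrArg Subtype.val (dirac_eq_dirac_iff.1 hθ)
  · calc μ = μ.fst ⊗ₘ μ.condKernel := (μ.disintegrate _).symm
      _ = μ.fst ⊗ₘ Kernel.deterministic γ hγ := Measure.compProd_congr <|
          hκγ.mono fun θ hθ => hθ.trans (Kernel.deterministic_apply hγ θ).symm
      _ = _ := Measure.compProd_deterministic hγ

/-- For a skew product `F(θ,x) = (S θ, f θ x)` over a homeomorphism `S` of a
compact metric space `Θ`, with strictly increasing `C²` fiber maps `f θ : [0,1] → (0,1)`,
every ergodic `F`-invariant Borel probability measure `μ` projecting to `m` on the base is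
the graph measure `m_γ` of some `(F,m)`-invariant graph `γ`. -/
theorem exists_invariant_graph_of_ergodic
    {Θ : Type*} [MetricSpace Θ] [CompactSpace Θ] [MeasurableSpace Θ] [BorelSpace Θ]
    (S : Θ ≃ₜ Θ) (m : Measure Θ) [IsProbabilityMeasure m]
    (hm : MeasurePreserving S m m)
    (f : Θ → ℝ → ℝ)
    (hmaps : ∀ θ, MapsTo (f θ) unitInterval (Ioo (0 : ℝ) 1))
    (hcont : Continuous fun p : Θ × unitInterval => f p.1 p.2)
    (hmono : ∀ θ, StrictMonoOn (f θ) unitInterval)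
    (hC2 : ∀ θ, ContDiffOn ℝ 2 (f θ) unitInterval)
    (F : Θ × unitInterval → Θ × unitInterval)
    (hF : ∀ p : Θ × unitInterval,
      F p = (S p.1, ⟨f p.1 p.2, Ioo_subset_Icc_self (hmaps p.1 p.2.2)⟩))
    (μ : Measure (Θ × unitInterval)) [IsProbabilityMeasure μ]
    (hμerg : Ergodic F μ)
    (hmarg : μ.map Prod.fst = m) :
    ∃ γ : Θ → unitInterval, Measurable γ ∧
      (∀ᵐ θ ∂m, f θ (γ θ) = (γ (S θ) : ℝ)) ∧
      μ = m.map fun θ => (θ, γ θ) :=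
  exists_invariant_graph_of_ergodic_general S m f hmaps hcont hmono F hF μ hμerg hmarg
end

section
/- Let Θ be a compact metric space, S : Θ → Θ a homeomorphism, I = [0,1], and F(θ,x) = (S(θ), f_θ(x)) a skew product on Θ × I such that (θ,x) ↦ f_θ(x) is continuous and each fiber map f_θ : I → (0,1) is a strictly increasing continuous map. Let A = ⋂_{n≥0} Fⁿ(Θ × I) be the maximal attractor with fibers A_θ, let Θ₀ ⊆ Θ be the set of θ for which A_θ is a single point, and let γ : Θ₀ → I assign to each θ ∈ Θ₀ the unique point of A_θ (the graph function). Then there exists an upper semicontinuous function γ̄ : Θ → I extending γ to the whole space Θ, i.e. γ̄(θ) ∈ A_θ for every θ ∈ Θ and γ̄(θ) = γ(θ) for every θ ∈ Θ₀. -/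
open Set

/-! The attractor `A` is the decreasing intersection of the compact sets `Fⁿ(Θ × I)`, each of
which meets every fiber because `S` is surjective; so `A` is compact with nonempty compact
fibers. Take `γ̄ θ = max A_θ`: the set `{θ | γ̄ θ ≥ c}` is the projection of the compact set
`A ∩ (Θ × [c, ∞))`, hence closed. -/

section IterateImage

variable {X : Type*} {F : X → X} {K : Set X}

theorem Set.MapsTo.antitone_iterate_image (hFK : MapsTo F K K) :
    Antitone fun n => F^[n] '' K := by
  refine antitone_nat_of_succ_le fun n => ?_
  rw [Function.iterate_succ, image_comp]
  exact image_mono hFK.image_subset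

variable [TopologicalSpace X]

theorem IsCompact.iterate_image (hK : IsCompact K) (hF : ContinuousOn F K) (hFK : MapsTo F K K)
    (n : ℕ) : IsCompact (F^[n] '' K) := by
  induction n with
  | zero => simpa using hK
  | succ n ih =>
    rw [Function.iterate_succ', image_comp]
    exact ih.image_of_continuousOn (hF.mono (hFK.iterate n).image_subset)

end IterateImage

section Fibers

variable {X Y : Type*} [TopologicalSpace X] [TopologicalSpace Y] [T2Space X] [T2Space Y]

theorem IsCompact.preimage_prodMk {A : Set (X × Y)} (hA : IsCompact A) (x : X) :
    IsCompact (Prod.mk x ⁻¹' A) :=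
  (hA.image continuous_snd).of_isClosed_subset
    (hA.isClosed.preimage (Continuous.prodMk_right x)) fun y hy => ⟨(x, y), hy, rfl⟩

theorem nonempty_preimage_prodMk_iInter {s : ℕ → Set (X × Y)} (hs : Antitone s)
    (hsc : ∀ n, IsCompact (s n)) (x : X) (hne : ∀ n, (Prod.mk x ⁻¹' s n).Nonempty) :
    (Prod.mk x ⁻¹' ⋂ n, s n).Nonempty := by
  rw [preimage_iInter]
  exact IsCompact.nonempty_iInter_of_sequence_nonempty_isCompact_isClosed _
    (fun n => preimage_mono (hs n.le_succ)) hne ((hsc 0).preimage_prodMk x)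
    fun n => ((hsc n).preimage_prodMk x).isClosed

variable [ConditionallyCompleteLinearOrder Y] [OrderTopology Y]

theorem upperSemicontinuous_sSup_preimage_prodMk {A : Set (X × Y)} (hA : IsCompact A)
    (hne : ∀ x, (Prod.mk x ⁻¹' A).Nonempty) :
    UpperSemicontinuous fun x => sSup (Prod.mk x ⁻¹' A) := by
  rw [upperSemicontinuous_iff_isClosed_preimage]
  intro c
  have hmax : ∀ x, IsGreatest (Prod.mk x ⁻¹' A) (sSup (Prod.mk x ⁻¹' A)) := fun x =>
    ⟨(hA.preimage_prodMk x).sSup_mem (hne x),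
      fun y hy => le_csSup (hA.preimage_prodMk x).bddAbove hy⟩
  have hset : (fun x => sSup (Prod.mk x ⁻¹' A)) ⁻¹' Ici c = Prod.fst '' (A ∩ univ ×ˢ Ici c) := by
    ext x
    constructor
    · intro hc
      exact ⟨(x, _), ⟨(hmax x).1, mem_univ x, hc⟩, rfl⟩
    · rintro ⟨⟨x, y⟩, ⟨hy, -, hcy⟩, rfl⟩
      exact le_trans hcy ((hmax x).2 hy)
  rw [hset]
  exact ((hA.inter_right (isClosed_univ.prod isClosed_Ici)).image continuous_fst).isClosed

end Fibers

section SkewProduct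

variable {X Y : Type*} {S : X → X} {F : X × Y → X × Y}

theorem nonempty_preimage_prodMk_iterate_image (hFS : Function.Semiconj Prod.fst F S)
    (hS : Function.Surjective S) {B : Set Y} (hB : B.Nonempty) (n : ℕ) (x : X) :
    (Prod.mk x ⁻¹' (F^[n] '' (univ ×ˢ B))).Nonempty := by
  have hfst : Prod.fst '' (F^[n] '' (univ ×ˢ B)) = univ := by
    rw [(hFS.iterate_right n).set_image, fst_image_prod _ hB, image_univ,
      (hS.iterate n).range_eq]
  obtain ⟨⟨x', y⟩, hy, rfl⟩ : x ∈ Prod.fst '' (F^[n] '' (univ ×ˢ B)) := by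
    rw [hfst]
    exact mem_univ x
  exact ⟨y, hy⟩

end SkewProduct

theorem graph_function_usc_extension_general
    {Θ : Type*} [MetricSpace Θ] [CompactSpace Θ]
    (S : Θ ≃ₜ Θ)
    (f : Θ → ℝ → ℝ)
    (hmaps : ∀ θ, MapsTo (f θ) (Icc (0 : ℝ) 1) (Ioo (0 : ℝ) 1))
    (hcont : ContinuousOn (fun p : Θ × ℝ => f p.1 p.2) (univ ×ˢ Icc (0 : ℝ) 1))
    (F : Θ × ℝ → Θ × ℝ) (hF : ∀ p : Θ × ℝ, F p = (S p.1, f p.1 p.2)) :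
    ∃ γbar : Θ → ℝ, UpperSemicontinuous γbar ∧
      (∀ θ : Θ, (θ, γbar θ) ∈ ⋂ n : ℕ, F^[n] '' (univ ×ˢ Icc (0 : ℝ) 1)) ∧
      ∀ θ : Θ, ∀ x : ℝ,
        {y : ℝ | (θ, y) ∈ ⋂ n : ℕ, F^[n] '' (univ ×ˢ Icc (0 : ℝ) 1)} = {x} → γbar θ = x := by
  set K : Set (Θ × ℝ) := univ ×ˢ Icc 0 1
  set A := ⋂ n : ℕ, F^[n] '' K
  have hFK : MapsTo F K K := fun p hp => by
    rw [hF]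
    exact ⟨mem_univ _, Ioo_subset_Icc_self (hmaps p.1 hp.2)⟩
  have hFcont : ContinuousOn F K :=
    ((S.continuous.comp continuous_fst).continuousOn.prodMk hcont).congr fun p _ => hF p
  have hFS : Function.Semiconj Prod.fst F S := fun p => by rw [hF]
  have hKc : IsCompact K := isCompact_univ.prod isCompact_Icc
  have hAc : IsCompact A :=
    hKc.of_isClosed_subset (isClosed_iInter fun n => (hKc.iterate_image hFcont hFK n).isClosed)
      (iInter_subset_of_subset 0 (by simp))
  have hAne : ∀ θ, (Prod.mk θ ⁻¹' A).Nonempty := fun θ =>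
    nonempty_preimage_prodMk_iInter hFK.antitone_iterate_image (hKc.iterate_image hFcont hFK) θ
      fun n => nonempty_preimage_prodMk_iterate_image hFS S.surjective
        (nonempty_Icc.2 zero_le_one) n θ
  refine ⟨fun θ => sSup (Prod.mk θ ⁻¹' A), upperSemicontinuous_sSup_preimage_prodMk hAc hAne,
    fun θ => (hAc.preimage_prodMk θ).sSup_mem (hAne θ), fun θ x hx => ?_⟩
  change sSup (Prod.mk θ ⁻¹' A) = x
  rw [show Prod.mk θ ⁻¹' A = {x} from hx, csSup_singleton]

/-- for a continuous skew product over a homeomorphism of a compact metric space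
with strictly increasing continuous fiber maps `f θ : [0,1] → (0,1)`, the graph function
`γ`, defined on the set `Θ₀` of base points whose maximal-attractor fiber
`A_θ = {x | (θ,x) ∈ ⋂_{n≥0} Fⁿ(Θ × I)}` is a single point, admits an upper semicontinuous
extension `γ̄ : Θ → ℝ` with `γ̄ θ ∈ A_θ` for every `θ`. -/
theorem graph_function_usc_extension
    {Θ : Type*} [MetricSpace Θ] [CompactSpace Θ]
    (S : Θ ≃ₜ Θ)
    (f : Θ → ℝ → ℝ)
    (hmaps : ∀ θ, MapsTo (f θ) (Icc (0 : ℝ) 1) (Ioo (0 : ℝ) 1))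
    (hcont : ContinuousOn (fun p : Θ × ℝ => f p.1 p.2) (univ ×ˢ Icc (0 : ℝ) 1))
    (hmono : ∀ θ, StrictMonoOn (f θ) (Icc (0 : ℝ) 1))
    (F : Θ × ℝ → Θ × ℝ) (hF : ∀ p : Θ × ℝ, F p = (S p.1, f p.1 p.2)) :
    ∃ γbar : Θ → ℝ, UpperSemicontinuous γbar ∧
      (∀ θ : Θ, (θ, γbar θ) ∈ ⋂ n : ℕ, F^[n] '' (univ ×ˢ Icc (0 : ℝ) 1)) ∧
      ∀ θ : Θ, ∀ x : ℝ,
        {y : ℝ | (θ, y) ∈ ⋂ n : ℕ, F^[n] '' (univ ×ˢ Icc (0 : ℝ) 1)} = {x} → γbar θ = x :=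
  graph_function_usc_extension_general S f hmaps hcont F hF
end

section
/- For every t ∈ 𝕋, the topological entropy of the shift S on the fiber p⁻¹(t) ⊆ Ω is zero: h_top(S, p⁻¹(t)) := lim_{ε→0} limsup_{n→∞} (1/n) log sup{ #E : E ⊆ p⁻¹(t) is (ε,n)-separated for S } = 0. -/
open MeasureTheory Set Filter Topology

/-- The expanding circle map `ω(t) = 4t (mod 1)` on `𝕋 = ℝ/ℤ`. -/
noncomputable def circleExp : AddCircle (1 : ℝ) → AddCircle (1 : ℝ) := fun t => (4 : ℕ) • t

/-- A metric on the countable product `𝕋^ℕ` compatible with the product topology. -/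
noncomputable instance : MetricSpace (ℕ → AddCircle (1 : ℝ)) := PiCountable.metricSpace

/-- The solenoid `Ω`: the inverse limit of `ω`, i.e. sequences `(t₋ₙ)ₙ` of pre-images with
`ω(t₋ₙ₋₁) = t₋ₙ`, equipped with (a metric compatible with) the product topology. -/
def Solenoid : Type := { u : ℕ → AddCircle (1 : ℝ) // ∀ n : ℕ, circleExp (u (n + 1)) = u n }

noncomputable instance : MetricSpace Solenoid := Subtype.metricSpace

/-- The shift homeomorphism `S(…, t₋₁, t₀) = (…, t₋₁, t₀, ω(t₀))` on the solenoid. -/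
noncomputable def solShift (u : Solenoid) : Solenoid :=
  ⟨fun n => Nat.casesOn n (circleExp (u.1 0)) (fun k => u.1 k), by
    intro n
    cases n with
    | zero => rfl
    | succ k => exact u.2 k⟩

/-- The projection `p : Ω → 𝕋`, `p((t₋ₙ)ₙ) = t₀`. -/
def solProj (u : Solenoid) : AddCircle (1 : ℝ) := u.1 0

/-! Two points of a common fibre of `p` share their `0`-th coordinate, and `S` moves the other
coordinates one step down the geometrically decreasing weights of the product metric, so `S` is
non-expanding on pairs of points in a common fibre. Hence an `(ε,n)`-separated subset of a fibre is
already `ε`-separated, and by compactness of `Ω` its cardinality is bounded independently of `n`. -/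

open scoped NNReal

theorem TotallyBounded.exists_card_le_of_pairwise_le_dist {X : Type*} [PseudoMetricSpace X]
    {s : Set X} (hs : TotallyBounded s) {ε : ℝ} (hε : 0 < ε) :
    ∃ M : ℕ, ∀ E : Finset X, ↑E ⊆ s → (∀ x ∈ E, ∀ y ∈ E, x ≠ y → ε ≤ dist x y) → E.card ≤ M := by
  -- `IsSeparated` asks for strict inequality, hence packing at radius `2δ = ε / 2` rather than `ε`.
  set δ : ℝ≥0 := ⟨ε / 4, by positivity⟩
  have hδ : δ ≠ 0 := by rw [← NNReal.coe_ne_zero]; change ε / 4 ≠ 0; positivity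
  obtain ⟨C, -, hCfin, hC⟩ := Metric.exists_finite_isCover_of_totallyBounded hδ hs
  refine ⟨hCfin.toFinset.card, fun E hEs hsep => ?_⟩
  have hEsep : Metric.IsSeparated (2 * δ : ℝ≥0) (E : Set X) := fun x hx y hy hxy => by
    change ((2 * δ : ℝ≥0) : ENNReal) < edist x y
    rw [edist_dist, ENNReal.coe_lt_ofReal]
    change 2 * (ε / 4) < dist x y
    linarith [hsep x hx y hy hxy]
  have hcard := (hEsep.encard_le_packingNumber hEs).trans
    ((Metric.packingNumber_two_mul_le_externalCoveringNumber δ s).trans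
      hC.externalCoveringNumber_le_encard)
  rwa [Set.encard_coe_eq_coe_finsetCard, hCfin.encard_eq_coe_toFinset_card,
    ENat.natCast_le_natCast] at hcard

namespace Function.Semiconj

variable {X Y : Type*} [PseudoMetricSpace X] {f : X → Y} {T : X → X} {g : Y → Y}

theorem dist_iterate_le (h : Semiconj f T g)
    (hT : ∀ x y, f x = f y → dist (T x) (T y) ≤ dist x y) {x y : X} (hxy : f x = f y) (i : ℕ) :
    dist (T^[i] x) (T^[i] y) ≤ dist x y := by
  induction i with
  | zero => exact le_rfl
  | succ k ih =>
    have hfiber : f (T^[k] x) = f (T^[k] y) := by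
      rw [(h.iterate_right k).eq, (h.iterate_right k).eq, hxy]
    rw [iterate_succ_apply', iterate_succ_apply']
    exact (hT _ _ hfiber).trans ih

theorem card_separated_fiber_le_exp (h : Semiconj f T g)
    (hT : ∀ x y, f x = f y → dist (T x) (T y) ≤ dist x y) {t : Y}
    (ht : TotallyBounded (f ⁻¹' {t})) {ε : ℝ} (hε : 0 < ε) {c : ℝ} (hc : 0 < c) :
    ∃ N : ℕ, ∀ n ≥ N, ∀ E : Finset X, (∀ u ∈ E, f u = t) →
      (∀ x ∈ E, ∀ y ∈ E, x ≠ y → ∃ i < n, ε ≤ dist (T^[i] x) (T^[i] y)) →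
      (E.card : ℝ) ≤ Real.exp (c * n) := by
  obtain ⟨M, hM⟩ := ht.exists_card_le_of_pairwise_le_dist hε
  have hexp : Tendsto (fun n : ℕ => Real.exp (c * n)) atTop atTop :=
    Real.tendsto_exp_atTop.comp (tendsto_natCast_atTop_atTop.const_mul_atTop hc)
  obtain ⟨N, hN⟩ := eventually_atTop.1 (hexp.eventually_ge_atTop (M : ℝ))
  refine ⟨N, fun n hn E hE hsep => le_trans ?_ (hN n hn)⟩
  suffices E.card ≤ M by exact_mod_cast this
  refine hM E (fun u hu => hE u hu) fun x hx y hy hxy => ?_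
  obtain ⟨i, -, hi⟩ := hsep x hx y hy hxy
  exact hi.trans (h.dist_iterate_le hT ((hE x hx).trans (hE y hy).symm) i)

end Function.Semiconj

theorem dist_le_dist_tail_of_head_eq (x y : ℕ → AddCircle (1 : ℝ)) (h : x 0 = y 0) :
    dist x y ≤ dist (fun k => x (k + 1)) (fun k => y (k + 1)) := by
  have hs := PiCountable.dist_summable x y
  have hs' := PiCountable.dist_summable (fun k => x (k + 1)) (fun k => y (k + 1))
  simp only [PiCountable.dist_eq_tsum, Encodable.encode_nat] at hs hs' ⊢
  rw [hs.tsum_eq_zero_add, h, dist_self, min_eq_right (by positivity), zero_add]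
  refine (hs.comp_injective (add_left_injective 1)).tsum_le_tsum (fun k => ?_) hs'
  exact min_le_min_right _ (pow_le_pow_of_le_one (by norm_num) (by norm_num) k.le_succ)

theorem semiconj_solProj_solShift : Function.Semiconj solProj solShift circleExp :=
  fun _ => rfl

theorem dist_solShift_le_of_solProj_eq (u v : Solenoid) (h : solProj u = solProj v) :
    dist (solShift u) (solShift v) ≤ dist u v :=
  dist_le_dist_tail_of_head_eq _ _ (congrArg circleExp h)

theorem totallyBounded_solenoid (s : Set Solenoid) : TotallyBounded s :=
  (totallyBounded_image_iff isometry_subtype_coe.isUniformInducing).mp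
    (isCompact_univ.totallyBounded.subset (subset_univ _))

/-- for every `t ∈ 𝕋` the topological entropy of the shift `S` on the fiber
`p⁻¹(t)` is zero, i.e. `lim_{ε→0} limsup_n (1/n) log sup{#E : E ⊆ p⁻¹(t) (ε,n)-separated} = 0`.
Equivalently (since the quantity under the limits is monotone in `ε` and nonnegative): for
every `ε > 0` and every `c > 0`, eventually in `n` every `(ε,n)`-separated subset `E` of
`p⁻¹(t)` (i.e. any two distinct points of `E` are `ε`-apart in the Bowen metric
`d_n(x,y) = max_{0 ≤ i < n} d(Sⁱx, Sⁱy)`) has cardinality at most `exp(c·n)`. -/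
theorem solenoid_fiber_topological_entropy_zero (t : AddCircle (1 : ℝ)) :
    ∀ ε > (0 : ℝ), ∀ c > (0 : ℝ), ∃ N : ℕ, ∀ n ≥ N, ∀ E : Finset Solenoid,
      (∀ u ∈ E, solProj u = t) →
      (∀ x ∈ E, ∀ y ∈ E, x ≠ y →
        ∃ i < n, ε ≤ dist (solShift^[i] x) (solShift^[i] y)) →
      (E.card : ℝ) ≤ Real.exp (c * n) := fun _ hε _ hc =>
  semiconj_solProj_solShift.card_separated_fiber_le_exp dist_solShift_le_of_solProj_eq
    (totallyBounded_solenoid _) hε hc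
end

section
/- Let Θ be a compact metric space, S : Θ → Θ a homeomorphism, m an ergodic S-invariant Borel probability measure, I = [0,1], and F(θ,x) = (S(θ), f_θ(x)) a skew product on Θ × I such that (θ,x) ↦ f_θ(x) is continuous and each f_θ is C¹ with (θ,x) ↦ Df_θ(x) continuous and strictly positive. Let γ be an (F,m)-invariant graph whose fiber Lyapunov exponent is negative: λ_m(γ) = ∫_Θ log Df_θ(γ(θ)) dm(θ) < 0. Then γ is attracting with respect to m_γ: for m-a.e. θ there exists δ > 0 such that for every z ∈ I with |z − γ(θ)| < δ one has |f_θⁿ(z) − f_θⁿ(γ(θ))| → 0 as n → ∞. -/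
open MeasureTheory Set Filter Topology

/-!
Let `φ θ = log Df_θ(γ θ)`, so that the Birkhoff sums of `φ` are the logarithms of the
derivatives of `f_θⁿ` at `γ θ`. Since `φ` has negative mean, the maximal ergodic lemma and
ergodicity show that for small `ε > 0` the Birkhoff sums of `φ + 2ε` are a.e. bounded above by
some `C(θ)`. Uniform continuity of `log Df` yields a scale `ρ` on which `f_θ` expands distances to
`γ θ` by at most `exp (φ θ + ε)`. Points within `ρ e^{-C}` of `γ θ` therefore stay `ρ`-close to
the orbit of `γ θ` forever, and approach it at the rate `e^{C - nε}`.
-/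

/-- The fiber iterates of a skew product: `fiberIter S f n θ = f_θⁿ = f_{S^{n-1}θ} ∘ ⋯ ∘ f_θ`. -/
def fiberIter {Θ X : Type*} (S : Θ → Θ) (f : Θ → X → X) : ℕ → Θ → X → X
  | 0, _, x => x
  | n + 1, θ, x => f (S^[n] θ) (fiberIter S f n θ x)

section BirkhoffMax

variable {α : Type*} {S : α → α} {ψ : α → ℝ}

/-- `birkhoffMax S ψ N x = max (0, S₁ψ x, …, S_Nψ x)`, where `Sₙψ = birkhoffSum S ψ n`. -/
noncomputable def birkhoffMax (S : α → α) (ψ : α → ℝ) : ℕ → α → ℝ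
  | 0, _ => 0
  | N + 1, x => max 0 (ψ x + birkhoffMax S ψ N (S x))

lemma birkhoffMax_nonneg (N : ℕ) (x : α) : 0 ≤ birkhoffMax S ψ N x := by
  cases N with
  | zero => exact le_rfl
  | succ N => exact le_max_left _ _

lemma birkhoffMax_le_succ : ∀ (N : ℕ) (x : α), birkhoffMax S ψ N x ≤ birkhoffMax S ψ (N + 1) x
  | 0, x => birkhoffMax_nonneg 1 x
  | N + 1, x => max_le_max le_rfl (add_le_add le_rfl (birkhoffMax_le_succ N (S x)))

lemma monotone_birkhoffMax (x : α) : Monotone fun N => birkhoffMax S ψ N x :=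
  monotone_nat_of_le_succ fun N => birkhoffMax_le_succ N x

lemma birkhoffSum_le_birkhoffMax : ∀ (n : ℕ) (x : α), birkhoffSum S ψ n x ≤ birkhoffMax S ψ n x
  | 0, x => le_rfl
  | n + 1, x => by
    rw [birkhoffSum_succ']
    exact (add_le_add le_rfl (birkhoffSum_le_birkhoffMax n (S x))).trans (le_max_right _ _)

lemma birkhoffMax_le_add_birkhoffMax_comp {N : ℕ} {x : α} (hx : 0 < birkhoffMax S ψ N x) :
    birkhoffMax S ψ N x ≤ ψ x + birkhoffMax S ψ N (S x) := by
  cases N with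
  | zero => exact absurd hx (lt_irrefl 0)
  | succ N =>
    have hpos : 0 < ψ x + birkhoffMax S ψ N (S x) := (lt_max_iff.1 hx).resolve_left (lt_irrefl 0)
    rw [birkhoffMax, max_eq_right hpos.le]
    exact add_le_add le_rfl (birkhoffMax_le_succ N (S x))

lemma bddAbove_birkhoffSum_comp_iff (x : α) :
    BddAbove (range fun n => birkhoffSum S ψ n (S x)) ↔
      BddAbove (range fun n => birkhoffSum S ψ n x) := by
  simp only [bddAbove_def, forall_mem_range]
  constructor
  · rintro ⟨C, hC⟩
    refine ⟨max 0 (ψ x + C), fun n => ?_⟩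
    cases n with
    | zero => exact le_max_left _ _
    | succ n => exact (birkhoffSum_succ' S ψ n x).trans_le (le_max_of_le_right (by linarith [hC n]))
  · rintro ⟨C, hC⟩
    exact ⟨C - ψ x, fun n => by linarith [birkhoffSum_succ' S ψ n x, hC (n + 1)]⟩

variable [MeasurableSpace α] {m : Measure α}

lemma measurable_birkhoffMax (hS : Measurable S) (hψ : Measurable ψ) :
    ∀ N, Measurable (birkhoffMax S ψ N)
  | 0 => measurable_const
  | N + 1 => measurable_const.max (hψ.add ((measurable_birkhoffMax hS hψ N).comp hS))

lemma integrable_birkhoffMax (hS : MeasurePreserving S m m) (hψ : Integrable ψ m) :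
    ∀ N, Integrable (birkhoffMax S ψ N) m
  | 0 => integrable_zero α ℝ m
  | N + 1 => (integrable_zero α ℝ m).sup
      (hψ.add (hS.integrable_comp_of_integrable (integrable_birkhoffMax hS hψ N)))

/-- The maximal ergodic lemma, by Garsia's argument: on this set `M ≤ ψ + M ∘ S` for
`M = birkhoffMax S ψ N`, while `M` vanishes off it and `M ∘ S` has the same integral as `M`. -/
theorem setIntegral_birkhoffMax_pos_nonneg (hS : MeasurePreserving S m m) (hψm : Measurable ψ)
    (hψ : Integrable ψ m) (N : ℕ) : 0 ≤ ∫ x in {x | 0 < birkhoffMax S ψ N x}, ψ x ∂m := by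
  set M := birkhoffMax S ψ N
  set A := {x | 0 < M x}
  have hMm : Measurable M := measurable_birkhoffMax hS.measurable hψm N
  have hM : Integrable M m := integrable_birkhoffMax hS hψ N
  have hMS : Integrable (fun x => M (S x)) m := hS.integrable_comp_of_integrable hM
  have hA : MeasurableSet A := measurableSet_lt measurable_const hMm
  have hM_on_A : ∫ x in A, M x ∂m = ∫ x, M x ∂m :=
    setIntegral_eq_integral_of_forall_compl_eq_zero fun x hx =>
      le_antisymm (not_lt.1 hx) (birkhoffMax_nonneg N x)
  have hMS_on_A : ∫ x in A, M (S x) ∂m ≤ ∫ x, M x ∂m := calc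
    _ ≤ ∫ x, M (S x) ∂m :=
      setIntegral_le_integral hMS (ae_of_all _ fun x => birkhoffMax_nonneg N (S x))
    _ = ∫ x, M x ∂m := by
      rw [← integral_map hS.aemeasurable hMm.aestronglyMeasurable, hS.map_eq]
  calc 0 ≤ ∫ x in A, M x ∂m - ∫ x in A, M (S x) ∂m := by linarith
    _ = ∫ x in A, (M x - M (S x)) ∂m := (integral_sub hM.integrableOn hMS.integrableOn).symm
    _ ≤ ∫ x in A, ψ x ∂m :=
      setIntegral_mono_on (hM.sub hMS).integrableOn hψ.integrableOn hA fun x hx => by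
        linarith [birkhoffMax_le_add_birkhoffMax_comp (S := S) hx]

theorem setIntegral_iUnion_birkhoffMax_pos_nonneg (hS : MeasurePreserving S m m)
    (hψm : Measurable ψ) (hψ : Integrable ψ m) :
    0 ≤ ∫ x in ⋃ N, {x | 0 < birkhoffMax S ψ N x}, ψ x ∂m :=
  ge_of_tendsto
    (tendsto_setIntegral_of_monotone
      (fun N => measurableSet_lt measurable_const (measurable_birkhoffMax hS.measurable hψm N))
      (fun _ _ hNN' _ hx => lt_of_lt_of_le hx (monotone_birkhoffMax _ hNN')) hψ.integrableOn)
    (Eventually.of_forall (setIntegral_birkhoffMax_pos_nonneg hS hψm hψ))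

theorem Ergodic.ae_bddAbove_birkhoffSum (hS : Ergodic S m) (hψm : Measurable ψ)
    (hψ : Integrable ψ m) (hneg : ∫ x, ψ x ∂m < 0) :
    ∀ᵐ x ∂m, BddAbove (range fun n => birkhoffSum S ψ n x) := by
  set E := {x | BddAbove (range fun n => birkhoffSum S ψ n x)}
  have hE : MeasurableSet E := measurableSet_bddAbove_range fun n =>
    Finset.measurable_sum _ fun k _ => hψm.comp (hS.measurable.iterate k)
  have hSE : S ⁻¹' E = E := ext fun x => bddAbove_birkhoffSum_comp_iff x
  refine (hS.ae_mem_or_ae_notMem hE hSE).resolve_right fun hunbdd => hneg.not_ge ?_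
  have hpos : ∀ᵐ x ∂m, x ∈ ⋃ N, {x | 0 < birkhoffMax S ψ N x} := hunbdd.mono fun x hx => by
    obtain ⟨n, hn⟩ : ∃ n, 0 < birkhoffSum S ψ n x := by
      simp only [E, mem_ofPred_eq, bddAbove_def, forall_mem_range, not_exists, not_forall,
        not_le] at hx
      exact hx 0
    exact mem_iUnion.2 ⟨n, hn.trans_le (birkhoffSum_le_birkhoffMax n x)⟩
  calc 0 ≤ ∫ x in ⋃ N, {x | 0 < birkhoffMax S ψ N x}, ψ x ∂m :=
        setIntegral_iUnion_birkhoffMax_pos_nonneg hS.toMeasurePreserving hψm hψ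
    _ = ∫ x, ψ x ∂m := setIntegral_eq_integral_of_ae_compl_eq_zero
        (hpos.mono fun x hx hx' => absurd hx hx')

end BirkhoffMax

section FiberIter

variable {Θ X : Type*} {S : Θ → Θ} {f : Θ → X → X}

lemma fiberIter_mem {s : Set X} (hf : ∀ θ, MapsTo (f θ) s s) (θ : Θ) {x : X} (hx : x ∈ s) :
    ∀ n, fiberIter S f n θ x ∈ s
  | 0 => hx
  | n + 1 => hf _ (fiberIter_mem hf θ hx n)

lemma fiberIter_eq_of_forall_iterate {γ : Θ → X} {θ : Θ}
    (hγ : ∀ j, f (S^[j] θ) (γ (S^[j] θ)) = γ (S (S^[j] θ))) :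
    ∀ n, fiberIter S f n θ (γ θ) = γ (S^[n] θ)
  | 0 => rfl
  | n + 1 => by
    rw [fiberIter, fiberIter_eq_of_forall_iterate hγ n, hγ n, Function.iterate_succ_apply']

end FiberIter

open Real Finset in
/-- Inductively the distance at time `n` is at most `exp (C - n ε)` times the initial one, which
keeps the two sequences `ρ`-close. -/
theorem tendsto_dist_of_dist_succ_le_exp {X : Type*} [PseudoMetricSpace X] {x y : ℕ → X}
    {c : ℕ → ℝ} {ρ ε C : ℝ} (hε : 0 < ε) (hC : ∀ n, ∑ k ∈ range n, (c k + ε) ≤ C)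
    (hstep : ∀ n, dist (x n) (y n) < ρ →
      dist (x (n + 1)) (y (n + 1)) ≤ exp (c n) * dist (x n) (y n))
    (h0 : dist (x 0) (y 0) < ρ * exp (-C)) :
    Tendsto (fun n => dist (x n) (y n)) atTop (𝓝 0) := by
  set d₀ := dist (x 0) (y 0)
  have hsum : ∀ n : ℕ, ∑ k ∈ range n, c k ≤ C - n * ε := fun n => by
    have := hC n
    rw [sum_add_distrib, sum_const, card_range, nsmul_eq_mul] at this
    linarith
  have hbound : ∀ n, dist (x n) (y n) ≤ exp (∑ k ∈ range n, c k) * d₀ := by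
    intro n
    induction n with
    | zero => simp [d₀]
    | succ n ih =>
      have hclose : dist (x n) (y n) < ρ := calc
        _ ≤ exp (∑ k ∈ range n, c k) * d₀ := ih
        _ ≤ exp C * d₀ := by
          gcongr
          linarith [hsum n, mul_nonneg n.cast_nonneg hε.le]
        _ < exp C * (ρ * exp (-C)) := mul_lt_mul_of_pos_left h0 (exp_pos C)
        _ = ρ := by rw [mul_left_comm, ← exp_add, add_neg_cancel, exp_zero, mul_one]
      calc _ ≤ exp (c n) * dist (x n) (y n) := hstep n hclose
        _ ≤ exp (c n) * (exp (∑ k ∈ range n, c k) * d₀) := by gcongr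
        _ = exp (∑ k ∈ range (n + 1), c k) * d₀ := by rw [sum_range_succ, exp_add]; ring
  have hlim : Tendsto (fun n : ℕ => exp (C - n * ε) * d₀) atTop (𝓝 0) := by
    have : Tendsto (fun n : ℕ => C - n * ε) atTop atBot :=
      tendsto_atBot_add_const_left _ C
        (tendsto_neg_atTop_atBot.comp (tendsto_natCast_atTop_atTop.atTop_mul_const hε))
    simpa using (tendsto_exp_atBot.comp this).mul_const d₀
  refine squeeze_zero (fun n => dist_nonneg) (fun n => (hbound n).trans ?_) hlim
  gcongr
  exact hsum n

open Real in
theorem exists_dist_image_le_exp_log_derivWithin {Θ : Type*} [PseudoMetricSpace Θ]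
    [CompactSpace Θ] {f : Θ → ℝ → ℝ} {s t : ℝ}
    (hdiff : ∀ θ, ∀ x ∈ Icc s t, DifferentiableWithinAt ℝ (f θ) (Icc s t) x)
    (hDpos : ∀ θ, ∀ x ∈ Icc s t, 0 < derivWithin (f θ) (Icc s t) x)
    (hlogD : ContinuousOn (fun p : Θ × ℝ => log (derivWithin (f p.1) (Icc s t) p.2))
      (univ ×ˢ Icc s t))
    {ε : ℝ} (hε : 0 < ε) :
    ∃ ρ > 0, ∀ θ, ∀ u ∈ Icc s t, ∀ v ∈ Icc s t, dist v u < ρ →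
      dist (f θ v) (f θ u) ≤ exp (log (derivWithin (f θ) (Icc s t) u) + ε) * dist v u := by
  obtain ⟨ρ, hρ, hclose⟩ := Metric.uniformContinuousOn_iff.1
    ((isCompact_univ.prod isCompact_Icc).uniformContinuousOn_of_continuous hlogD) ε hε
  refine ⟨ρ, hρ, fun θ u hu v hv hvu => ?_⟩
  have hsub : uIcc v u ⊆ Icc s t := uIcc_subset_Icc hv hu
  have hderiv : ∀ x ∈ uIcc v u,
      ‖derivWithin (f θ) (Icc s t) x‖ ≤ exp (log (derivWithin (f θ) (Icc s t) u) + ε) := by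
    intro x hx
    have hxu : dist (θ, x) (θ, u) < ρ := by
      rw [Prod.dist_eq, dist_self, max_eq_right dist_nonneg]
      exact (Real.dist_right_le_of_mem_uIcc hx).trans_lt hvu
    have hlog := (abs_lt.1 (hclose (θ, x) ⟨trivial, hsub hx⟩ (θ, u) ⟨trivial, hu⟩ hxu)).2
    rw [norm_of_nonneg (hDpos θ x (hsub hx)).le, ← exp_log (hDpos θ x (hsub hx))]
    exact exp_le_exp.2 (by linarith)
  simpa only [dist_eq_norm] using Convex.norm_image_sub_le_of_norm_hasDerivWithin_le
    (fun x hx => ((hdiff θ x (hsub hx)).hasDerivWithinAt).mono hsub) hderiv (convex_uIcc v u)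
    right_mem_uIcc left_mem_uIcc

theorem ContinuousOn.measurable_comp {α β γ : Type*} [MeasurableSpace α] [TopologicalSpace β]
    [MeasurableSpace β] [OpensMeasurableSpace β] [TopologicalSpace γ] [MeasurableSpace γ]
    [BorelSpace γ] {g : β → γ} {s : Set β} (hg : ContinuousOn g s) {h : α → β}
    (hh : Measurable h) (hs : ∀ x, h x ∈ s) : Measurable fun x => g (h x) :=
  hg.domRestrict.measurable.comp (hh.subtype_mk (h := hs))

theorem invariant_graph_attracting_of_negative_lyapunov_general
    {Θ : Type*} [MetricSpace Θ] [CompactSpace Θ] [MeasurableSpace Θ] [BorelSpace Θ]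
    (S : Θ ≃ₜ Θ) (m : Measure Θ) [IsProbabilityMeasure m] (hSerg : Ergodic ⇑S m)
    (f : Θ → ℝ → ℝ)
    (hmaps : ∀ θ, MapsTo (f θ) (Icc (0 : ℝ) 1) (Icc (0 : ℝ) 1))
    (hdiff : ∀ θ, ∀ x ∈ Icc (0 : ℝ) 1, DifferentiableWithinAt ℝ (f θ) (Icc (0 : ℝ) 1) x)
    (hDcont : ContinuousOn (fun p : Θ × ℝ => derivWithin (f p.1) (Icc (0 : ℝ) 1) p.2)
      (univ ×ˢ Icc (0 : ℝ) 1))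
    (hDpos : ∀ θ, ∀ x ∈ Icc (0 : ℝ) 1, 0 < derivWithin (f θ) (Icc (0 : ℝ) 1) x)
    (γ : Θ → ℝ) (hγmeas : Measurable γ) (hγmem : ∀ θ, γ θ ∈ Icc (0 : ℝ) 1)
    (hgraph : ∀ᵐ θ ∂m, f θ (γ θ) = γ (S θ))
    (hneg : ∫ θ, Real.log (derivWithin (f θ) (Icc (0 : ℝ) 1) (γ θ)) ∂m < 0) :
    ∀ᵐ θ ∂m, ∃ δ > (0 : ℝ), ∀ z ∈ Icc (0 : ℝ) 1, |z - γ θ| < δ →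
      Tendsto (fun n : ℕ => |fiberIter (⇑S) f n θ z - fiberIter (⇑S) f n θ (γ θ)|)
        atTop (𝓝 0) := by
  have hlogD : ContinuousOn (fun p : Θ × ℝ => Real.log (derivWithin (f p.1) (Icc 0 1) p.2))
      (univ ×ˢ Icc 0 1) := hDcont.log fun p hp => (hDpos p.1 p.2 hp.2).ne'
  set φ : Θ → ℝ := fun θ => Real.log (derivWithin (f θ) (Icc 0 1) (γ θ))
  have hφm : Measurable φ :=
    hlogD.measurable_comp (measurable_id.prodMk hγmeas) fun θ => ⟨trivial, hγmem θ⟩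
  obtain ⟨B, hB⟩ := (isCompact_univ.prod isCompact_Icc).exists_bound_of_continuousOn hlogD
  have hφ : Integrable φ m := .of_bound hφm.aestronglyMeasurable B
    (ae_of_all _ fun θ => hB (θ, γ θ) ⟨trivial, hγmem θ⟩)
  obtain ⟨ε, hε, hψneg⟩ : ∃ ε > 0, ∫ θ, (φ θ + 2 * ε) ∂m < 0 := by
    refine ⟨-(∫ θ, φ θ ∂m) / 3, by linarith, ?_⟩
    rw [integral_add hφ (integrable_const _), integral_const, probReal_univ, one_smul]
    linarith
  have hbdd := hSerg.ae_bddAbove_birkhoffSum (hφm.add_const _) (hφ.add (integrable_const _)) hψneg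
  have horbit : ∀ᵐ θ ∂m, ∀ j, f (S^[j] θ) (γ (S^[j] θ)) = γ (S (S^[j] θ)) :=
    ae_all_iff.2 fun j => (hSerg.toMeasurePreserving.iterate j).quasiMeasurePreserving.ae hgraph
  obtain ⟨ρ, hρ, hlip⟩ := exists_dist_image_le_exp_log_derivWithin hdiff hDpos hlogD hε
  filter_upwards [hbdd, horbit] with θ ⟨C, hC⟩ hθ
  refine ⟨ρ * Real.exp (-C), by positivity, fun z hz hzδ => ?_⟩
  simpa only [Real.dist_eq] using tendsto_dist_of_dist_succ_le_exp
    (x := fun n => fiberIter S f n θ z) (y := fun n => fiberIter S f n θ (γ θ))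
    (c := fun k => φ (S^[k] θ) + ε) hε
    (fun n => (Finset.sum_congr rfl fun k _ => by rw [add_assoc, ← two_mul]).trans_le
      (hC (mem_range_self n)))
    (fun n hn => by
      simp only [fiberIter, fiberIter_eq_of_forall_iterate hθ n] at hn ⊢
      exact hlip _ _ (hγmem _) _ (fiberIter_mem hmaps θ hz n) hn)
    ((Real.dist_eq z (γ θ)).trans_lt hzδ)

/-- for a continuous skew product on `Θ × [0,1]` over a homeomorphism of a
compact metric space with an ergodic invariant measure `m`, with `C¹` fiber maps of jointly
continuous strictly positive derivative, an `(F,m)`-invariant graph `γ` with negative fiber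
Lyapunov exponent `λ_m(γ) = ∫ log Df_θ(γ θ) dm < 0` is attracting with respect to `m_γ`:
for `m`-a.e. `θ` nearby fiber orbits are asymptotic to the orbit of `γ θ`. -/
theorem invariant_graph_attracting_of_negative_lyapunov
    {Θ : Type*} [MetricSpace Θ] [CompactSpace Θ] [MeasurableSpace Θ] [BorelSpace Θ]
    (S : Θ ≃ₜ Θ) (m : Measure Θ) [IsProbabilityMeasure m] (hSerg : Ergodic ⇑S m)
    (f : Θ → ℝ → ℝ)
    (hmaps : ∀ θ, MapsTo (f θ) (Icc (0 : ℝ) 1) (Icc (0 : ℝ) 1))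
    (hcont : ContinuousOn (fun p : Θ × ℝ => f p.1 p.2) (univ ×ˢ Icc (0 : ℝ) 1))
    (hdiff : ∀ θ, ∀ x ∈ Icc (0 : ℝ) 1, DifferentiableWithinAt ℝ (f θ) (Icc (0 : ℝ) 1) x)
    (hDcont : ContinuousOn (fun p : Θ × ℝ => derivWithin (f p.1) (Icc (0 : ℝ) 1) p.2)
      (univ ×ˢ Icc (0 : ℝ) 1))
    (hDpos : ∀ θ, ∀ x ∈ Icc (0 : ℝ) 1, 0 < derivWithin (f θ) (Icc (0 : ℝ) 1) x)
    (γ : Θ → ℝ) (hγmeas : Measurable γ) (hγmem : ∀ θ, γ θ ∈ Icc (0 : ℝ) 1)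
    (hgraph : ∀ᵐ θ ∂m, f θ (γ θ) = γ (S θ))
    (hneg : ∫ θ, Real.log (derivWithin (f θ) (Icc (0 : ℝ) 1) (γ θ)) ∂m < 0) :
    ∀ᵐ θ ∂m, ∃ δ > (0 : ℝ), ∀ z ∈ Icc (0 : ℝ) 1, |z - γ θ| < δ →
      Tendsto (fun n : ℕ => |fiberIter (⇑S) f n θ z - fiberIter (⇑S) f n θ (γ θ)|)
        atTop (𝓝 0) :=
  invariant_graph_attracting_of_negative_lyapunov_general S m hSerg f hmaps hdiff hDcont hDpos γ
    hγmeas hγmem hgraph hneg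
end
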